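/- arXiv:math/9903079 — 3 statements merged into one kernel-verified Lean document; each statement's English description precedes it below -/
import Mathlib

section
/- Let (Γ₁, Γ₂, τ) be a Belavin–Drinfeld triple with Γ₁ ∩ Γ₂ = ∅, and set A = J − 1 and B = J⁻¹ − 1, where J = 1 + (q−q⁻¹)Σ_{α∈Γ̃₁} sign(α,τα) q^{K_{α,τα}} e_{τα}⊗e_{−α}. Then: (i) B = Σ_{α∈Γ̃₁} B_{α,τα} e_{τα}⊗e_{−α} for some scalars B_{α,τα} (i.e. B is supported on the same elementary tensors as A); (ii) R̄_J = J⁻¹R_sJ₂₁ = R_s + B + A₂₁ + (q−1)B^⋗ + (q⁻¹−1)A₂₁^⋖, where B^⋗ is the part of B supported on pairs with α ⋗ τα and A₂₁^⋖ is the part of A₂₁ supported on pairs with α ⋖ τα. -/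
namespace GGS

open Finset
open scoped Classical

noncomputable section

/-- `n × n` complex matrices, `Mat_n(ℂ)`. -/
abbrev MatN (n : ℕ) := Matrix (Fin n) (Fin n) ℂ
/-- `Mat_n(ℂ) ⊗ Mat_n(ℂ)`, realized as matrices indexed by pairs. -/
abbrev MatT (n : ℕ) := Matrix (Fin n × Fin n) (Fin n × Fin n) ℂ
/-- `Mat_n(ℂ)^{⊗3}`. -/
abbrev MatT3 (n : ℕ) := Matrix (Fin n × Fin n × Fin n) (Fin n × Fin n × Fin n) ℂ

/-- Matrix unit `E_{ij}` (ℕ-indices; `0` if out of range). -/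
def E (n i j : ℕ) : MatN n := fun a b => if (a : ℕ) = i ∧ (b : ℕ) = j then 1 else 0

/-- Tensor (Kronecker) product of two `n × n` matrices. -/
def tens {n : ℕ} (A B : MatN n) : MatT n := fun p q => A p.1 q.1 * B p.2 q.2

/-- `M₂₁` : swap of the two tensor factors. -/
def swap21 {n : ℕ} (M : MatT n) : MatT n := fun p q => M (p.2, p.1) (q.2, q.1)

/-- The permutation (Casimir) element `P = Σ E_{ij} ⊗ E_{ji}`. -/
def Pm (n : ℕ) : MatT n := ∑ i ∈ range n, ∑ j ∈ range n, tens (E n i j) (E n j i)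

/-- `P⁰ = Σ E_{ii} ⊗ E_{ii}`. -/
def P0 (n : ℕ) : MatT n := ∑ i ∈ range n, tens (E n i i) (E n i i)

/-- `M₁₂ = M ⊗ 1`. -/
def lift12 {n : ℕ} (M : MatT n) : MatT3 n :=
  fun p q => M (p.1, p.2.1) (q.1, q.2.1) * (if p.2.2 = q.2.2 then 1 else 0)

/-- `M₁₃`. -/
def lift13 {n : ℕ} (M : MatT n) : MatT3 n :=
  fun p q => M (p.1, p.2.2) (q.1, q.2.2) * (if p.2.1 = q.2.1 then 1 else 0)

/-- `M₂₃ = 1 ⊗ M`. -/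
def lift23 {n : ℕ} (M : MatT n) : MatT3 n :=
  fun p q => M (p.2.1, p.2.2) (q.2.1, q.2.2) * (if p.1 = q.1 then 1 else 0)

/-- The quantum Yang–Baxter equation `R₁₂R₁₃R₂₃ = R₂₃R₁₃R₁₂`. -/
def QYBE {n : ℕ} (M : MatT n) : Prop :=
  lift12 M * lift13 M * lift23 M = lift23 M * lift13 M * lift12 M

/-- The Hecke relation `(PR − q)(PR + q⁻¹) = 0`. -/
def Hecke {n : ℕ} (q : ℝ) (M : MatT n) : Prop :=
  (Pm n * M - (q : ℂ) • (1 : MatT n)) * (Pm n * M + (q : ℂ)⁻¹ • (1 : MatT n)) = 0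

/-- Standard basis vector `e_i` of `ℂⁿ` (as a function on indices). -/
def evec (i : ℕ) : ℕ → ℂ := fun k => if k = i then 1 else 0
/-- The root vector `e_i − e_j`. -/
def rvec (i j : ℕ) : ℕ → ℂ := evec i - evec j
/-- The simple root `α_i = e_i − e_{i+1}` (0-based indexing). -/
def svec (i : ℕ) : ℕ → ℂ := rvec i (i + 1)
/-- The inner product on `ℂⁿ` for which `(e_i)` is orthonormal (restricted to real vectors). -/
def ipn (n : ℕ) (x y : ℕ → ℂ) : ℂ := ∑ k ∈ range n, x k * y k

/-- A Belavin–Drinfeld triple of type `A_{n−1}`; simple roots are indexed `0,…,n−2`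
(0-based: index `i` stands for `α_i = e_i − e_{i+1}`). -/
structure BDTriple (n : ℕ) where
  Γ1 : Finset ℕ
  Γ2 : Finset ℕ
  τ : ℕ → ℕ
  mem1 : ∀ i ∈ Γ1, i + 1 < n
  mem2 : ∀ i ∈ Γ2, i + 1 < n
  bij : Set.BijOn τ ↑Γ1 ↑Γ2
  isometry : ∀ i ∈ Γ1, ∀ j ∈ Γ1, ipn n (svec (τ i)) (svec (τ j)) = ipn n (svec i) (svec j)
  nilp : ∀ i ∈ Γ1, ∃ k ≥ 1, τ^[k] i ∉ Γ1

variable {n : ℕ}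

/-- The positive root `e_i − e_j` (`i < j`) lies in `Γ̃₁` (the positive part of `Span Γ₁`). -/
def SpanRoot (T : BDTriple n) (i j : ℕ) : Prop :=
  i < j ∧ ∀ k, i ≤ k → k < j → k ∈ T.Γ1

/-- `q = τ(p)` for positive roots, via the additive extension of `τ` to `Γ̃₁`. -/
def tauStep (T : BDTriple n) (p q : ℕ × ℕ) : Prop :=
  SpanRoot T p.1 p.2 ∧ q.1 < q.2 ∧ rvec q.1 q.2 = ∑ k ∈ Finset.Ico p.1 p.2, svec (T.τ k)

/-- `q = τᵏ(p)`. -/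
def precK (T : BDTriple n) : ℕ → ℕ × ℕ → ℕ × ℕ → Prop
  | 0, p, q => p = q
  | k + 1, p, q => ∃ r, tauStep T p r ∧ precK T k r q

/-- `p ≺ q`, i.e. `q = τᵏ p` for some `k ≥ 1`. -/
def prec (T : BDTriple n) (p q : ℕ × ℕ) : Prop := ∃ k, precK T (k + 1) p q

/-- `p ≺← q` : `q = τᵏ p` and `τᵏ` reverses orientation on `p`. -/
def RevOri (T : BDTriple n) (p q : ℕ × ℕ) : Prop :=
  ∃ k, precK T (k + 1) p q ∧ T.τ^[k + 1] p.1 = q.2 - 1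

/-- `p ≺→ q` : `q = τᵏ p` and `τᵏ` preserves orientation on `p`. -/
def PresOri (T : BDTriple n) (p q : ℕ × ℕ) : Prop :=
  ∃ k, precK T (k + 1) p q ∧ T.τ^[k + 1] p.1 = q.1

/-- `sign(α,β)` : `(−1)^{1−|α|}` in the orientation-reversing case, `1` otherwise. -/
def sgn (T : BDTriple n) (p q : ℕ × ℕ) : ℂ :=
  if RevOri T p q then (-1 : ℂ) ^ (p.2 - p.1 - 1) else 1

/-- Sum over all pairs of (would-be) positive roots with indices `< n`. -/
def sumRoots (n : ℕ) (f : ℕ × ℕ → ℕ × ℕ → MatT n) : MatT n :=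
  ∑ i ∈ range n, ∑ j ∈ range n, ∑ k ∈ range n, ∑ l ∈ range n, f (i, j) (k, l)

/-- `a = Σ_{α≺β} sign(α,β) (e_{−α} ⊗ e_β − e_β ⊗ e_{−α})`. -/
def aMat (T : BDTriple n) : MatT n :=
  sumRoots n fun p q =>
    if prec T p q then
      sgn T p q • (tens (E n p.2 p.1) (E n q.1 q.2) - tens (E n q.1 q.2) (E n p.2 p.1))
    else 0

/-- `r_s = ½ P⁰ + Σ_{α>0} e_{−α} ⊗ e_α`. -/
def rsMat (n : ℕ) : MatT n :=
  (1 / 2 : ℂ) • P0 n +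
    ∑ i ∈ range n, ∑ j ∈ range n, if i < j then tens (E n j i) (E n i j) else 0

/-- `ε = a r_s + r_s a + a²`. -/
def epsMat (T : BDTriple n) : MatT n :=
  aMat T * rsMat n + rsMat n * aMat T + aMat T * aMat T

/-- Entry of a tensor-square matrix, with ℕ indices. -/
def entry (M : MatT n) (a b c d : ℕ) : ℂ :=
  if h : a < n ∧ b < n ∧ c < n ∧ d < n then
    M (⟨a, h.1⟩, ⟨b, h.2.1⟩) (⟨c, h.2.2.1⟩, ⟨d, h.2.2.2⟩)
  else 0

/-- The coefficient of `e_β ⊗ e_{−α}` in `M` (here `p = α`, `q = β`). -/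
def coeffBA (M : MatT n) (p q : ℕ × ℕ) : ℂ := entry M q.1 p.2 q.2 p.1

/-- `q^z = exp(z · ln q)`. -/
def qpow (q : ℝ) (z : ℂ) : ℂ := Complex.exp (z * (Real.log q : ℂ))

/-- The coefficients `K_{α,β}`. -/
def Kc (T : BDTriple n) (p q : ℕ × ℕ) : ℂ :=
  (if p.2 = q.1 then (1 / 2 : ℂ) else 0) - (if q.2 = p.1 then (1 / 2 : ℂ) else 0)
    + (if ∃ g : ℕ × ℕ, prec T p g ∧ prec T g q ∧ p.2 = g.1 then 1 else 0)
    - (if ∃ g : ℕ × ℕ, prec T p g ∧ prec T g q ∧ g.2 = p.1 then 1 else 0)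
    + (if RevOri T p q then 1 - ((p.2 - p.1 : ℕ) : ℂ) else 0)

/-- `Jⁱ = 1 + (q − q⁻¹) Σ_{β = τⁱα} sign(α,β) q^{K_{α,β}} e_β ⊗ e_{−α}`. -/
def Jlevel (q : ℝ) (T : BDTriple n) (i : ℕ) : MatT n :=
  1 + sumRoots n fun p r =>
    if precK T i p r then
      (((q : ℂ) - (q : ℂ)⁻¹) * sgn T p r * qpow q (Kc T p r)) • tens (E n r.1 r.2) (E n p.2 p.1)
    else 0

/-- `J = J¹ J² ⋯` (levels beyond the maximal power of `τ` contribute the identity). -/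
def Jmat (q : ℝ) (T : BDTriple n) : MatT n :=
  ((List.range n).map fun i => Jlevel q T (i + 1)).prod

/-- The standard Drinfeld–Jimbo `R`-matrix `R_s`. -/
def RsQ (n : ℕ) (q : ℝ) : MatT n :=
  (q : ℂ) • P0 n
    + (∑ i ∈ range n, ∑ j ∈ range n, if i ≠ j then tens (E n i i) (E n j j) else 0)
    + ((q : ℂ) - (q : ℂ)⁻¹) •
        (∑ i ∈ range n, ∑ j ∈ range n, if j < i then tens (E n i j) (E n j i) else 0)

/-- `e_{−α} ∧_c e_β = q^{−c} e_{−α} ⊗ e_β − q^c e_β ⊗ e_{−α}` (`p = α`, `r = β`). -/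
def wedgeC {n : ℕ} (q : ℝ) (c : ℂ) (p r : ℕ × ℕ) : MatT n :=
  qpow q (-c) • tens (E n p.2 p.1) (E n r.1 r.2) - qpow q c • tens (E n r.1 r.2) (E n p.2 p.1)

/-- `R̄_GGS = R_s + (q−q⁻¹) Σ_{α≺β} sign(α,β) e_{−α} ∧_{−sign(α,β) ε_{α,β}} e_β`. -/
def RbarGGS (q : ℝ) (T : BDTriple n) : MatT n :=
  RsQ n q + ((q : ℂ) - (q : ℂ)⁻¹) •
    sumRoots n fun p r =>
      if prec T p r then
        sgn T p r • wedgeC q (-(sgn T p r) * coeffBA (epsMat T) p r) p r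
      else 0

/-- `R̄_J = J⁻¹ R_s J₂₁`. -/
def RbarJ (q : ℝ) (T : BDTriple n) : MatT n :=
  (Jmat q T)⁻¹ * RsQ n q * swap21 (Jmat q T)

/-- `q^{r⁰}` for a diagonal⊗diagonal `r⁰`. -/
def qr0 (n : ℕ) (q : ℝ) (r0 : ℕ → ℕ → ℂ) : MatT n :=
  ∑ i ∈ range n, ∑ j ∈ range n, qpow q (r0 i j) • tens (E n i i) (E n j j)

/-- `R_GGS = q^{r⁰} R̄_GGS q^{r⁰}`. -/
def RGGS (q : ℝ) (T : BDTriple n) (r0 : ℕ → ℕ → ℂ) : MatT n :=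
  qr0 n q r0 * RbarGGS q T * qr0 n q r0

/-- `R_J = q^{r⁰} R̄_J q^{r⁰}`. -/
def RJ (q : ℝ) (T : BDTriple n) (r0 : ℕ → ℕ → ℂ) : MatT n :=
  qr0 n q r0 * RbarJ q T * qr0 n q r0

/-- `r⁰ ∈ 𝔥 ∧ 𝔥`, i.e. the coefficient matrix is antisymmetric. -/
def Antisym (n : ℕ) (r0 : ℕ → ℕ → ℂ) : Prop := ∀ i < n, ∀ j < n, r0 i j = -r0 j i

/-- The Belavin–Drinfeld compatibility equations
`((α − τα) ⊗ 1) r⁰ = ½ ((α + τα) ⊗ 1) P⁰` for all `α ∈ Γ₁`, written componentwise. -/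
def Compat (T : BDTriple n) (r0 : ℕ → ℕ → ℂ) : Prop :=
  ∀ s ∈ T.Γ1, ∀ j < n,
    r0 s j - r0 (s + 1) j - r0 (T.τ s) j + r0 (T.τ s + 1) j
      = (1 / 2 : ℂ) *
        ((if j = s then 1 else 0) - (if j = s + 1 then 1 else 0)
          + (if j = T.τ s then 1 else 0) - (if j = T.τ s + 1 then 1 else 0))

/-- `a₊ⁱ` : the part of `a₊` supported on pairs with `β = τⁱα`. -/
def aPlusLev (T : BDTriple n) (i : ℕ) : MatT n :=
  sumRoots n fun p r =>
    if precK T i p r then (-(sgn T p r)) • tens (E n r.1 r.2) (E n p.2 p.1) else 0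

/-- `a₊ = Σ_{α≺β} (−sign(α,β)) e_β ⊗ e_{−α}`. -/
def aPlus (T : BDTriple n) : MatT n :=
  sumRoots n fun p r =>
    if prec T p r then (-(sgn T p r)) • tens (E n r.1 r.2) (E n p.2 p.1) else 0

/-- `a₋ = Σ_{α≺β} sign(α,β) e_{−α} ⊗ e_β`. -/
def aMinus (T : BDTriple n) : MatT n :=
  sumRoots n fun p r =>
    if prec T p r then sgn T p r • tens (E n p.2 p.1) (E n r.1 r.2) else 0

/-- `P₊ = Σ_{i<j} E_{ij}⊗E_{ji} + ½P⁰`. -/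
def PPlus (n : ℕ) : MatT n :=
  (∑ i ∈ range n, ∑ j ∈ range n, if i < j then tens (E n i j) (E n j i) else 0)
    + (1 / 2 : ℂ) • P0 n

/-- `P₋ = Σ_{i>j} E_{ij}⊗E_{ji} + ½P⁰`. -/
def PMinus (n : ℕ) : MatT n :=
  (∑ i ∈ range n, ∑ j ∈ range n, if j < i then tens (E n i j) (E n j i) else 0)
    + (1 / 2 : ℂ) • P0 n

/-- The matrix `Σ_{i≥j} a₊ⁱa₊ʲ − Σ_{i<j} a₊ⁱa₊ʲ + a₊P₋ + a₋P₊ + P₊a₊ + a₊a₋ − a₋a₊`. -/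
def Mmat (T : BDTriple n) : MatT n :=
  (∑ i ∈ range n, ∑ j ∈ range n, if j ≤ i then aPlusLev T (i + 1) * aPlusLev T (j + 1) else 0)
    - (∑ i ∈ range n, ∑ j ∈ range n, if i < j then aPlusLev T (i + 1) * aPlusLev T (j + 1) else 0)
    + aPlus T * PMinus n + aMinus T * PPlus n + PPlus n * aPlus T
    + aPlus T * aMinus T - aMinus T * aPlus T

/-- `L_{α,β}` : `½` if `α ⋖ β`, `−½` if `α ⋗ β`, `0` otherwise. -/
def Lc (p r : ℕ × ℕ) : ℂ :=
  if p.2 = r.1 then 1 / 2 else if r.2 = p.1 then -(1 / 2) else 0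

/-- The part of `M` (viewed on the basis `e_{τα} ⊗ e_{−α}`, `α ∈ Γ̃₁`) supported on
pairs with `α ⋗ τα`. -/
def partGtr (T : BDTriple n) (M : MatT n) : MatT n :=
  sumRoots n fun p r =>
    if tauStep T p r ∧ r.2 = p.1 then coeffBA M p r • tens (E n r.1 r.2) (E n p.2 p.1) else 0

/-- The part of `M` (viewed on the basis `e_{−α} ⊗ e_{τα}`, `α ∈ Γ̃₁`) supported on
pairs with `α ⋖ τα`. -/
def partLess21 (T : BDTriple n) (M : MatT n) : MatT n :=
  sumRoots n fun p r =>
    if tauStep T p r ∧ p.2 = r.1 then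
      entry M p.2 r.1 p.1 r.2 • tens (E n p.2 p.1) (E n r.1 r.2)
    else 0

/-!
Since `Γ₁ ∩ Γ₂ = ∅`, an interval of simple roots spanned by `Γ₁` is never met by the `τ`-image of
another one. Hence no root is moved twice, so `J = J¹ = 1 + A`, and `A` is a combination of
tensors `e_{τα} ⊗ e_{−α}`. Such combinations are closed under products (`τ` is additive), and
`A` strictly lowers the index of the second factor, so `A` is nilpotent and
`B = Σ_{k ≥ 1} (−A)^k` is again such a combination: this is (i).

For (ii) write `R_s = 1 + (q − 1) P⁰ + (q − q⁻¹) P_<` with `P_< = Σ_{i>j} E_{ij} ⊗ E_{ji}` and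
expand `(1 + B) R_s (1 + A₂₁)`. Products `X Y₂₁` of two such combinations vanish, and since `τα`
lies entirely to one side of `α`, the three `P_<`-terms reduce, via `A + B + BA = 0`, to
`−P⁰ A₂₁`.
-/

lemma sum_range_evec (i t : ℕ) : ∑ s ∈ range t, evec i s = if i < t then 1 else 0 := by
  simp [evec, Finset.sum_ite_eq']

lemma sum_range_succ_svec (i u : ℕ) :
    ∑ s ∈ range (u + 1), svec i s = if i = u then 1 else 0 := by
  simp only [svec, rvec, Pi.sub_apply, Finset.sum_sub_distrib, sum_range_evec]
  split_ifs <;> first | omega | norm_num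

lemma sum_range_succ_rvec {x y : ℕ} (hxy : x < y) (u : ℕ) :
    ∑ s ∈ range (u + 1), rvec x y s = if x ≤ u ∧ u < y then 1 else 0 := by
  simp only [rvec, Pi.sub_apply, Finset.sum_sub_distrib, sum_range_evec]
  split_ifs <;> first | omega | norm_num

lemma rvec_inj {x y x' y' : ℕ} (h : x < y) (h' : x' < y') (he : rvec x y = rvec x' y') :
    x = x' ∧ y = y' := by
  have key : ∀ u, (x ≤ u ∧ u < y ↔ x' ≤ u ∧ u < y') := fun u => by
    have hu := congrArg (fun v => ∑ s ∈ range (u + 1), v s) he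
    simp only [sum_range_succ_rvec h, sum_range_succ_rvec h'] at hu
    split_ifs at hu <;> first | tauto | norm_num at hu
  have := key x; have := key x'; have := key (y - 1); have := key (y' - 1)
  omega

section TauStep

variable {T : BDTriple n} {p r : ℕ × ℕ}

lemma tauStep.exists_tau_eq (h : tauStep T p r) {u : ℕ} (h1 : r.1 ≤ u) (h2 : u < r.2) :
    ∃ k ∈ Ico p.1 p.2, T.τ k = u := by
  by_contra! hne
  -- Sum the coordinates `s ≤ u` of `τα = Σ_k α_{τk}`: the left side gives `1`, the right side
  -- counts the `k` with `τ k = u`.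
  have key := congrArg (fun v => ∑ s ∈ range (u + 1), v s) h.2.2
  simp only [Finset.sum_apply] at key
  rw [sum_range_succ_rvec h.2.1, Finset.sum_comm,
    Finset.sum_eq_zero fun k hk => by rw [sum_range_succ_svec, if_neg (hne k hk)]] at key
  simp [h1, h2] at key

lemma tauStep.mem_Γ2 (h : tauStep T p r) {u : ℕ} (h1 : r.1 ≤ u) (h2 : u < r.2) :
    u ∈ T.Γ2 := by
  obtain ⟨k, hk, rfl⟩ := h.exists_tau_eq h1 h2
  rw [Finset.mem_Ico] at hk
  exact T.bij.mapsTo (h.1.2 k hk.1 hk.2)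

lemma tauStep.unique {r' : ℕ × ℕ} (h : tauStep T p r) (h' : tauStep T p r') : r = r' := by
  obtain ⟨h1, h2⟩ := rvec_inj h.2.1 h'.2.1 (h.2.2.trans h'.2.2.symm)
  exact Prod.ext h1 h2

lemma tauStep.trans {x y z u v w : ℕ} (h₁ : tauStep T (x, y) (v, w))
    (h₂ : tauStep T (y, z) (u, v)) : tauStep T (x, z) (u, w) := by
  obtain ⟨⟨hxy, hsp₁⟩, hvw, he₁⟩ := h₁
  obtain ⟨⟨hyz, hsp₂⟩, huv, he₂⟩ := h₂
  refine ⟨⟨by omega, fun k hk1 hk2 => ?_⟩, by omega, ?_⟩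
  · by_cases hky : k < y
    · exact hsp₁ k hk1 hky
    · exact hsp₂ k (by omega) hk2
  · simp only at he₁ he₂ ⊢
    rw [← Finset.sum_Ico_consecutive _ hxy.le hyz.le, ← he₁, ← he₂]
    funext s
    simp only [rvec, Pi.add_apply, Pi.sub_apply]
    ring

variable (hd : T.Γ1 ∩ T.Γ2 = ∅)
include hd

lemma tauStep.image_disjoint_span (h : tauStep T p r) {p' r' : ℕ × ℕ}
    (h' : tauStep T p' r') {u : ℕ} (hu : r.1 ≤ u ∧ u < r.2) (hu' : p'.1 ≤ u ∧ u < p'.2) :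
    False := by
  have h1 : u ∈ T.Γ1 ∩ T.Γ2 := Finset.mem_inter.2 ⟨h'.1.2 u hu'.1 hu'.2, h.mem_Γ2 hu.1 hu.2⟩
  simp [hd] at h1

lemma tauStep.snd_le_or_snd_le (h : tauStep T p r) : p.2 ≤ r.1 ∨ r.2 ≤ p.1 := by
  by_contra! hcon
  have := h.1.1; have := h.2.1
  exact h.image_disjoint_span hd h (u := max p.1 r.1) (by omega) (by omega)

lemma tauStep.not_tauStep {s s' : ℕ × ℕ} (h : tauStep T p s) : ¬ tauStep T s s' := fun h' =>
  h.image_disjoint_span hd h' (u := s.1) ⟨le_rfl, h.2.1⟩ ⟨le_rfl, h'.1.1⟩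

end TauStep

section Lowering

variable {ι R : Type*} (g : ι → ℕ)

def LowersBy [Zero R] (k : ℕ) (M : Matrix ι ι R) : Prop := ∀ i j, M i j ≠ 0 → g j + k ≤ g i

variable {g} [Semiring R]

lemma lowersBy_one [DecidableEq ι] : LowersBy g 0 (1 : Matrix ι ι R) := by
  intro i j h
  obtain rfl : i = j := by_contra fun hij => h (Matrix.one_apply_ne hij)
  omega

variable [Fintype ι]

lemma LowersBy.mul {k l : ℕ} {M N : Matrix ι ι R} (hM : LowersBy g k M) (hN : LowersBy g l N) :
    LowersBy g (k + l) (M * N) := by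
  intro i j h
  obtain ⟨v, -, hv⟩ := Finset.exists_ne_zero_of_sum_ne_zero h
  have := hM i v (left_ne_zero_of_mul hv)
  have := hN v j (right_ne_zero_of_mul hv)
  omega

variable [DecidableEq ι]

lemma LowersBy.pow {M : Matrix ι ι R} (hM : LowersBy g 1 M) (k : ℕ) : LowersBy g k (M ^ k) := by
  induction k with
  | zero => rw [pow_zero]; exact lowersBy_one
  | succ k ih => rw [pow_succ]; exact ih.mul hM

lemma LowersBy.pow_eq_zero {M : Matrix ι ι R} (hM : LowersBy g 1 M) {m : ℕ} (hg : ∀ i, g i < m) :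
    M ^ m = 0 := by
  ext i j
  by_contra h
  have := hM.pow m i j h
  have := hg i
  omega

end Lowering

lemma inv_one_add_eq_geom_sum {ι R : Type*} [Fintype ι] [DecidableEq ι] [CommRing R]
    {M : Matrix ι ι R} {m : ℕ} (hM : M ^ m = 0) : (1 + M)⁻¹ = ∑ i ∈ range m, (-M) ^ i := by
  apply Matrix.inv_eq_right_inv
  rw [← sub_neg_eq_add, mul_neg_geom_sum, neg_pow, hM, mul_zero, sub_zero]

lemma tens_E_apply (i j k l : ℕ) (a b c d : Fin n) :
    tens (E n i j) (E n k l) (a, b) (c, d)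
      = if (a : ℕ) = i ∧ (c : ℕ) = j ∧ (b : ℕ) = k ∧ (d : ℕ) = l then 1 else 0 := by
  simp only [tens, E, mul_ite, mul_one, mul_zero]
  split_ifs <;> tauto

lemma sum_range_sum_range_apply {F : ℕ → ℕ → MatT n} (a b : Fin n) {x y : Fin n × Fin n}
    (hF : ∀ i j, ¬ (i = (a : ℕ) ∧ j = (b : ℕ)) → F i j x y = 0) :
    (∑ i ∈ range n, ∑ j ∈ range n, F i j) x y = F a b x y := by
  simp only [Matrix.sum_apply]
  rw [Finset.sum_eq_single_of_mem (a : ℕ) (by simp) fun i _ hi =>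
      Finset.sum_eq_zero fun j _ => hF i j (by tauto),
    Finset.sum_eq_single_of_mem (b : ℕ) (by simp) fun j _ hj => hF a j (by tauto)]

def PLower (n : ℕ) : MatT n :=
  ∑ i ∈ range n, ∑ j ∈ range n, if j < i then tens (E n i j) (E n j i) else 0

lemma P0_apply (a b : Fin n) (y : Fin n × Fin n) :
    P0 n (a, b) y = if y = (a, b) ∧ a = b then 1 else 0 := by
  obtain ⟨c, d⟩ := y
  simp only [P0, Matrix.sum_apply, tens_E_apply, ite_and, Finset.sum_ite_eq, Finset.mem_range,
    Fin.is_lt, if_true, Prod.mk.injEq, Fin.ext_iff]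
  split_ifs <;> first | rfl | omega

lemma PLower_apply (a b : Fin n) (y : Fin n × Fin n) :
    PLower n (a, b) y = if y = (b, a) ∧ b < a then 1 else 0 := by
  obtain ⟨c, d⟩ := y
  rw [PLower, sum_range_sum_range_apply a b fun i j hij => by
    simp only [Matrix.ite_apply, tens_E_apply]; split_ifs <;> first | rfl | omega]
  simp only [Matrix.ite_apply, Matrix.zero_apply, tens_E_apply, Prod.mk.injEq, Fin.ext_iff,
    Fin.lt_def, true_and]
  split_ifs <;> first | rfl | omega

lemma RsQ_eq (q : ℝ) :
    RsQ n q = 1 + ((q : ℂ) - 1) • P0 n + ((q : ℂ) - (q : ℂ)⁻¹) • PLower n := by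
  suffices h : (∑ i ∈ range n, ∑ j ∈ range n,
      if i ≠ j then tens (E n i i) (E n j j) else 0 : MatT n) = 1 - P0 n by
    rw [RsQ, h, ← PLower]; module
  ext ⟨a, b⟩ ⟨c, d⟩
  rw [sum_range_sum_range_apply a b fun i j hij => by
    simp only [Matrix.ite_apply, tens_E_apply]; split_ifs <;> first | rfl | omega]
  simp only [Matrix.sub_apply, Matrix.one_apply, P0_apply, Matrix.ite_apply, tens_E_apply,
    Prod.mk.injEq, Fin.ext_iff, true_and]
  split_ifs <;> first | omega | norm_num

section Products

variable (M : MatT n)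

lemma mul_P0_apply (x : Fin n × Fin n) (c d : Fin n) :
    (M * P0 n) x (c, d) = if c = d then M x (c, d) else 0 := by
  rw [Matrix.mul_apply, Finset.sum_eq_single (c, d) (fun v _ hv => by
    obtain ⟨v1, v2⟩ := v; rw [P0_apply, if_neg (by tauto), mul_zero]) (by simp)]
  simp [P0_apply]

lemma P0_mul_apply (a b : Fin n) (y : Fin n × Fin n) :
    (P0 n * M) (a, b) y = if a = b then M (a, b) y else 0 := by
  rw [Matrix.mul_apply, Finset.sum_eq_single (a, b) (fun v _ hv => by
    rw [P0_apply, if_neg (by tauto), zero_mul]) (by simp)]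
  simp [P0_apply]

lemma mul_PLower_apply (x : Fin n × Fin n) (c d : Fin n) :
    (M * PLower n) x (c, d) = if c < d then M x (d, c) else 0 := by
  rw [Matrix.mul_apply, Finset.sum_eq_single (d, c) (fun v _ hv => by
    obtain ⟨v1, v2⟩ := v
    rw [PLower_apply, if_neg fun h => hv (by simp_all), mul_zero]) (by simp)]
  simp [PLower_apply]

lemma PLower_mul_apply (a b : Fin n) (y : Fin n × Fin n) :
    (PLower n * M) (a, b) y = if b < a then M (b, a) y else 0 := by
  rw [Matrix.mul_apply, Finset.sum_eq_single (b, a) (fun v _ hv => by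
    rw [PLower_apply, if_neg (by tauto), zero_mul]) (by simp)]
  simp [PLower_apply]

end Products

lemma entry_coe (M : MatT n) (a b c d : Fin n) :
    entry M (a : ℕ) (b : ℕ) (c : ℕ) (d : ℕ) = M (a, b) (c, d) :=
  dif_pos ⟨a.is_lt, b.is_lt, c.is_lt, d.is_lt⟩

lemma swap21_one : swap21 (1 : MatT n) = 1 := by
  ext ⟨a, b⟩ ⟨c, d⟩
  simp only [swap21, Matrix.one_apply, Prod.mk.injEq, and_comm]

lemma swap21_add (M N : MatT n) : swap21 (M + N) = swap21 M + swap21 N := rfl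

lemma sumRoots_ite_apply (C : ℕ × ℕ → ℕ × ℕ → Prop) [∀ p r, Decidable (C p r)]
    (s : ℕ × ℕ → ℕ × ℕ → ℂ) (a b c d : Fin n) :
    (sumRoots n fun p r =>
        if C p r then s p r • tens (E n r.1 r.2) (E n p.2 p.1) else 0) (a, b) (c, d)
      = if C ((d : ℕ), (b : ℕ)) ((a : ℕ), (c : ℕ))
          then s ((d : ℕ), (b : ℕ)) ((a : ℕ), (c : ℕ)) else 0 := by
  have hsmul : ∀ p r, (if C p r then s p r • tens (E n r.1 r.2) (E n p.2 p.1) else 0)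
      = (if C p r then s p r else 0) • tens (E n r.1 r.2) (E n p.2 p.1) := fun p r => by
    split_ifs <;> simp
  simp only [sumRoots, hsmul, Matrix.sum_apply, Matrix.smul_apply, tens_E_apply, smul_eq_mul,
    mul_ite, mul_one, mul_zero, ite_and, Finset.sum_ite_irrel, Finset.sum_const_zero,
    Finset.sum_ite_eq, Finset.mem_range, Fin.is_lt, if_true]

lemma sumRoots_ite_apply' (C : ℕ × ℕ → ℕ × ℕ → Prop) [∀ p r, Decidable (C p r)]
    (s : ℕ × ℕ → ℕ × ℕ → ℂ) (a b c d : Fin n) :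
    (sumRoots n fun p r =>
        if C p r then s p r • tens (E n p.2 p.1) (E n r.1 r.2) else 0) (a, b) (c, d)
      = if C ((c : ℕ), (a : ℕ)) ((b : ℕ), (d : ℕ))
          then s ((c : ℕ), (a : ℕ)) ((b : ℕ), (d : ℕ)) else 0 := by
  rw [← sumRoots_ite_apply C s b a d c]
  simp only [sumRoots, Matrix.sum_apply, Matrix.ite_apply, Matrix.smul_apply, Matrix.zero_apply,
    tens, mul_comm]

/-- The entry `M (a, b) (c, d)` is the coefficient of `E_{ac} ⊗ E_{bd} = e_β ⊗ e_{−α}` with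
`α = e_d − e_b`, `β = e_a − e_c`; `M` is supported on the pairs with `β = τα`. -/
def IsTauSupported (T : BDTriple n) (M : MatT n) : Prop :=
  ∀ a b c d : Fin n, ¬ tauStep T ((d : ℕ), (b : ℕ)) ((a : ℕ), (c : ℕ)) → M (a, b) (c, d) = 0

namespace IsTauSupported

variable {T : BDTriple n} {M N : MatT n}

lemma neg (hM : IsTauSupported T M) : IsTauSupported T (-M) := by
  intro a b c d h
  rw [Matrix.neg_apply, hM a b c d h, neg_zero]

lemma mul (hM : IsTauSupported T M) (hN : IsTauSupported T N) : IsTauSupported T (M * N) := by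
  intro a b c d h
  rw [Matrix.mul_apply]
  refine Finset.sum_eq_zero fun ⟨v₁, v₂⟩ _ => ?_
  by_cases h₁ : tauStep T ((v₂ : ℕ), (b : ℕ)) ((a : ℕ), (v₁ : ℕ))
  · by_cases h₂ : tauStep T ((d : ℕ), (v₂ : ℕ)) ((v₁ : ℕ), (c : ℕ))
    · exact absurd (h₂.trans h₁) h
    · rw [hN v₁ v₂ c d h₂, mul_zero]
  · rw [hM a b v₁ v₂ h₁, zero_mul]

lemma pow_succ (hM : IsTauSupported T M) (k : ℕ) : IsTauSupported T (M ^ (k + 1)) := by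
  induction k with
  | zero => rwa [pow_one]
  | succ k ih => rw [_root_.pow_succ]; exact ih.mul hM

lemma sum {ι : Type*} (s : Finset ι) {f : ι → MatT n} (hf : ∀ i ∈ s, IsTauSupported T (f i)) :
    IsTauSupported T (∑ i ∈ s, f i) := by
  intro a b c d h
  rw [Matrix.sum_apply]
  exact Finset.sum_eq_zero fun i hi => hf i hi a b c d h

lemma lowersBy (hM : IsTauSupported T M) :
    LowersBy (fun x : Fin n × Fin n => (x.2 : ℕ)) 1 M := by
  intro ⟨a, b⟩ ⟨c, d⟩ h
  have := (not_not.1 (mt (hM a b c d) h)).1.1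
  simp only at this ⊢
  omega

lemma mul_P0 (hM : IsTauSupported T M) : IsTauSupported T (M * P0 n) := by
  intro a b c d h
  rw [mul_P0_apply, hM a b c d h, ite_self]

lemma exists_eq_sumRoots (hM : IsTauSupported T M) :
    ∃ c : ℕ × ℕ → ℂ, M = sumRoots n fun p r =>
      if tauStep T p r then c p • tens (E n r.1 r.2) (E n p.2 p.1) else 0 := by
  refine ⟨fun p => if h : ∃ r, tauStep T p r then entry M h.choose.1 p.2 h.choose.2 p.1 else 0,
    ?_⟩
  ext ⟨a, b⟩ ⟨c, d⟩
  rw [sumRoots_ite_apply]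
  split_ifs with h
  · have hex : ∃ r, tauStep T ((d : ℕ), (b : ℕ)) r := ⟨_, h⟩
    simp only [dif_pos hex]
    rw [hex.choose_spec.unique h]
    exact (entry_coe M a b c d).symm
  · exact hM a b c d h

lemma partGtr_eq (hM : IsTauSupported T M) : partGtr T M = M * P0 n := by
  ext ⟨a, b⟩ ⟨c, d⟩
  rw [partGtr, sumRoots_ite_apply, mul_P0_apply, coeffBA, entry_coe]
  by_cases h : tauStep T ((d : ℕ), (b : ℕ)) ((a : ℕ), (c : ℕ))
  · simp [h, Fin.ext_iff]
  · simp [h, hM a b c d h]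

lemma partLess21_swap21_eq (hM : IsTauSupported T M) :
    partLess21 T (swap21 M) = P0 n * swap21 M := by
  ext ⟨a, b⟩ ⟨c, d⟩
  rw [partLess21, sumRoots_ite_apply', P0_mul_apply, entry_coe]
  by_cases h : tauStep T ((c : ℕ), (a : ℕ)) ((b : ℕ), (d : ℕ))
  · simp [h, Fin.ext_iff]
  · simp [h, swap21, hM b a d c h]

end IsTauSupported

section Disjoint

variable {T : BDTriple n} (hd : T.Γ1 ∩ T.Γ2 = ∅) {M N : MatT n}
include hd

lemma IsTauSupported.mul_swap21_eq_zero (hM : IsTauSupported T M) (hN : IsTauSupported T N) :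
    M * swap21 N = 0 := by
  ext ⟨a, b⟩ ⟨c, d⟩
  rw [Matrix.mul_apply, Matrix.zero_apply]
  refine Finset.sum_eq_zero fun ⟨v₁, v₂⟩ _ => ?_
  by_cases h₁ : tauStep T ((v₂ : ℕ), (b : ℕ)) ((a : ℕ), (v₁ : ℕ))
  · by_cases h₂ : tauStep T ((c : ℕ), (v₁ : ℕ)) ((v₂ : ℕ), (d : ℕ))
    · -- `v₁ − 1` would lie in the `τ`-image `[a, v₁)` of one root and in the span `[c, v₁)` of
      -- the other, i.e. in `Γ₁ ∩ Γ₂`.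
      have := h₁.2.1; have := h₂.1.1
      exact (h₁.image_disjoint_span hd h₂ (u := v₁ - 1) (by simp only; omega)
        (by simp only; omega)).elim
    · rw [show swap21 N (v₁, v₂) (c, d) = N (v₂, v₁) (d, c) from rfl, hN v₂ v₁ d c h₂, mul_zero]
  · rw [hM a b v₁ v₂ h₁, zero_mul]

lemma IsTauSupported.mul_PLower_apply (hM : IsTauSupported T M) (a b c d : Fin n) :
    (M * PLower n) (a, b) (c, d) = if b ≤ a then M (a, b) (d, c) else 0 := by
  rw [GGS.mul_PLower_apply]
  -- `τα = e_a − e_d` lies to the right of `α = e_c − e_b` (`b ≤ a`) or to its left (`d ≤ c`).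
  by_cases h : tauStep T ((c : ℕ), (b : ℕ)) ((a : ℕ), (d : ℕ))
  · have := h.1.1; have := h.2.1
    have := h.snd_le_or_snd_le hd
    simp only [Fin.lt_def, Fin.le_def] at this ⊢
    split_ifs <;> first | rfl | omega
  · simp [hM a b d c h]

lemma IsTauSupported.PLower_cross_terms {A B : MatT n} (hB : IsTauSupported T B)
    (hrel : A + B + B * A = 0) :
    B * PLower n + PLower n * swap21 A + B * PLower n * swap21 A = -(P0 n * swap21 A) := by
  ext ⟨a, b⟩ ⟨c, d⟩
  have hBA : (B * PLower n * swap21 A) (a, b) (c, d)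
      = if b ≤ a then (B * A) (a, b) (d, c) else 0 := by
    simp only [Matrix.mul_apply (M := B * PLower n), Fintype.sum_prod_type,
      hB.mul_PLower_apply hd, swap21, ite_mul, zero_mul]
    split_ifs
    · rw [Matrix.mul_apply, Fintype.sum_prod_type, Finset.sum_comm]
    · simp
  have hrel' := congrFun (congrFun hrel (a, b)) (d, c)
  simp only [Matrix.add_apply, Matrix.zero_apply] at hrel'
  simp only [Matrix.add_apply, Matrix.neg_apply, hB.mul_PLower_apply hd, PLower_mul_apply,
    P0_mul_apply, hBA, swap21]
  split_ifs <;> first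
    | linear_combination hrel'
    | (subst_vars; linear_combination hrel')
    | (exfalso; omega)
    | simp

lemma one_add_mul_RsQ_mul_one_add_swap21 {A B : MatT n} (hA : IsTauSupported T A)
    (hB : IsTauSupported T B) (hrel : A + B + B * A = 0) (q : ℝ) :
    (1 + B) * RsQ n q * (1 + swap21 A) = RsQ n q + B + swap21 A
      + ((q : ℂ) - 1) • (B * P0 n) + ((q : ℂ)⁻¹ - 1) • (P0 n * swap21 A) := by
  have h₀ : B * swap21 A = 0 := hB.mul_swap21_eq_zero hd hA
  have h₁ : B * P0 n * swap21 A = 0 := hB.mul_P0.mul_swap21_eq_zero hd hA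
  have hc := hB.PLower_cross_terms hd hrel
  rw [RsQ_eq]
  simp only [add_mul, mul_add, one_mul, mul_one, smul_mul_assoc, mul_smul_comm, h₀, h₁, add_zero]
  linear_combination (norm := module) ((q : ℂ) - (q : ℂ)⁻¹) • hc

end Disjoint

section Twist

variable (q : ℝ) {T : BDTriple n}

lemma precK_one_iff {p r : ℕ × ℕ} : precK T 1 p r ↔ tauStep T p r :=
  ⟨fun ⟨_, h, rfl⟩ => h, fun h => ⟨r, h, rfl⟩⟩

lemma isTauSupported_Jlevel_one_sub_one : IsTauSupported T (Jlevel q T 1 - 1) := by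
  intro a b c d h
  rw [Jlevel, add_sub_cancel_left, sumRoots_ite_apply, if_neg (mt precK_one_iff.1 h)]

variable (hd : T.Γ1 ∩ T.Γ2 = ∅)
include hd

lemma Jlevel_add_two (k : ℕ) : Jlevel q T (k + 2) = 1 := by
  have hzero : ∀ p r, ¬ precK T (k + 2) p r := fun p r ⟨_, h, _, h', _⟩ => h.not_tauStep hd h'
  simp [Jlevel, sumRoots, hzero]

lemma Jmat_eq_Jlevel_one : Jmat q T = Jlevel q T 1 := by
  cases n with
  | zero => exact Subsingleton.elim _ _
  | succ m =>
    rw [Jmat, List.range_succ_eq_map, List.map_cons, List.prod_cons, List.map_map,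
      List.prod_eq_one (by simp [Jlevel_add_two q hd]), mul_one]

lemma isTauSupported_Jmat_sub_one : IsTauSupported T (Jmat q T - 1) := by
  rw [Jmat_eq_Jlevel_one q hd]
  exact isTauSupported_Jlevel_one_sub_one q

lemma Jmat_sub_one_pow_eq_zero : (Jmat q T - 1) ^ (n + 1) = 0 :=
  (isTauSupported_Jmat_sub_one q hd).lowersBy.pow_eq_zero fun x => by omega

lemma Jmat_inv_mul_self : (Jmat q T)⁻¹ * Jmat q T = 1 := by
  have hunit : IsUnit (Jmat q T) := by
    simpa using IsNilpotent.isUnit_one_add ⟨n + 1, Jmat_sub_one_pow_eq_zero q hd⟩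
  exact Matrix.nonsing_inv_mul _ ((Matrix.isUnit_iff_isUnit_det _).mp hunit)

lemma Jmat_inv_sub_one_eq_sum :
    (Jmat q T)⁻¹ - 1 = ∑ i ∈ range n, (-(Jmat q T - 1)) ^ (i + 1) := by
  conv_lhs => rw [← add_sub_cancel (1 : MatT n) (Jmat q T),
    inv_one_add_eq_geom_sum (Jmat_sub_one_pow_eq_zero q hd)]
  rw [Finset.sum_range_succ', pow_zero, add_sub_cancel_right]

lemma isTauSupported_Jmat_inv_sub_one : IsTauSupported T ((Jmat q T)⁻¹ - 1) := by
  rw [Jmat_inv_sub_one_eq_sum q hd]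
  exact IsTauSupported.sum _ fun i _ => (isTauSupported_Jmat_sub_one q hd).neg.pow_succ i

end Twist

theorem stmt_10_general {n : ℕ} (q : ℝ) (T : BDTriple n) (hdisj : T.Γ1 ∩ T.Γ2 = ∅) :
    (∃ c : ℕ × ℕ → ℂ, (Jmat q T)⁻¹ - 1 =
      sumRoots n fun p r =>
        if tauStep T p r then c p • tens (E n r.1 r.2) (E n p.2 p.1) else 0) ∧
    RbarJ q T = RsQ n q + ((Jmat q T)⁻¹ - 1) + swap21 (Jmat q T - 1)
      + ((q : ℂ) - 1) • partGtr T ((Jmat q T)⁻¹ - 1)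
      + ((q : ℂ)⁻¹ - 1) • partLess21 T (swap21 (Jmat q T - 1)) := by
  have hA := isTauSupported_Jmat_sub_one q hdisj
  have hB := isTauSupported_Jmat_inv_sub_one q hdisj
  refine ⟨hB.exists_eq_sumRoots, ?_⟩
  have hrel : (Jmat q T - 1) + ((Jmat q T)⁻¹ - 1) + ((Jmat q T)⁻¹ - 1) * (Jmat q T - 1) = 0 := by
    rw [← sub_eq_zero_of_eq (Jmat_inv_mul_self q hdisj)]
    noncomm_ring
  have hJ := swap21_add 1 (Jmat q T - 1)
  rw [add_sub_cancel, swap21_one] at hJ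
  rw [RbarJ, hB.partGtr_eq, hA.partLess21_swap21_eq, hJ,
    ← one_add_mul_RsQ_mul_one_add_swap21 hdisj hA hB hrel, add_sub_cancel]

/-- in the disjoint case, with `A = J − 1`, `B = J⁻¹ − 1`:
(i) `B` is supported on the elementary tensors `e_{τα} ⊗ e_{−α}`, `α ∈ Γ̃₁`;
(ii) `R̄_J = R_s + B + A₂₁ + (q−1)B^⋗ + (q⁻¹−1)A₂₁^⋖`. -/
theorem stmt_10 {n : ℕ} (hn : 2 ≤ n) (q : ℝ) (hq : 0 < q) (hq1 : q ≠ 1)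
    (T : BDTriple n) (hdisj : T.Γ1 ∩ T.Γ2 = ∅) :
    (∃ c : ℕ × ℕ → ℂ, (Jmat q T)⁻¹ - 1 =
      sumRoots n fun p r =>
        if tauStep T p r then c p • tens (E n r.1 r.2) (E n p.2 p.1) else 0) ∧
    RbarJ q T = RsQ n q + ((Jmat q T)⁻¹ - 1) + swap21 (Jmat q T - 1)
      + ((q : ℂ) - 1) • partGtr T ((Jmat q T)⁻¹ - 1)
      + ((q : ℂ)⁻¹ - 1) • partLess21 T (swap21 (Jmat q T - 1)) :=
  stmt_10_general q T hdisj

end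
end GGS
end

section
/- Let M be a monoid containing elements r_{ij}^{ab} for 1 ≤ i < j ≤ 3 and 1 ≤ a < b ≤ n, satisfying: (1) r_{ij}^{ab} r_{kl}^{cd} = r_{kl}^{cd} r_{ij}^{ab} whenever {(i,a),(j,b)} ∩ {(k,c),(l,d)} = ∅; and (2) r_{12}^{ab} r_{13}^{ac} r_{23}^{bc} = r_{23}^{bc} r_{13}^{ac} r_{12}^{ab} for all 1 ≤ a < b < c ≤ n. Then (Π_{i=1}^{n−1} Π_{j=1}^{n−i} r_{13}^{j,i+j} r_{12}^{j,i+j}) · (Π_{i=1}^{n−1} Π_{j=1}^{n−i} r_{23}^{j,i+j}) = (Π_{i=1}^{n−1} Π_{j=1}^{n−i} r_{13}^{j,i+j} r_{23}^{j,i+j}) · (Π_{i=1}^{n−1} Π_{j=1}^{n−i} r_{12}^{j,i+j}), all products taken left to right in lexicographic order of (i,j). -/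
/-!
Elements attached to pairs `(a, b)`, `(c, d)` with `a < c` and `b < d` commute by the first
relation, so each of the four products may be reordered from diagonal order into column order.
In column order the identity follows by induction on `n`: the new column `b = n + 1` of each
factor commutes past the old products until the step reduces to `D X Y = C D`, where `D` is
the product of all `r₁₂` and `X`, `Y`, `C` are the new columns of `r₁₃`, `r₂₃`, `r₁₃ r₂₃`.
That is again proved column by column, and moving the column
`r₁₂^{m,m+1} ⋯ r₁₂^{1,m+1}` past `X r₂₃^{m+1,v}` costs one Yang–Baxter relation per entry.
-/

open List

section

variable {M : Type*} [Monoid M]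

theorem List.prod_map_mul_of_pairwise_commute {ι : Type*} {f g : ι → M} :
    ∀ {l : List ι}, l.Pairwise (fun i k => Commute (g i) (f k)) →
      (l.map fun i => f i * g i).prod = (l.map f).prod * (l.map g).prod
  | [], _ => by simp
  | a :: l, h => by
    rw [pairwise_cons] at h
    have hcomm : Commute (g a) (l.map f).prod := Commute.list_prod_right _ _ fun _ hx => by
      obtain ⟨k, hk, rfl⟩ := mem_map.mp hx
      exact h.1 k hk
    simp only [map_cons, prod_cons, prod_map_mul_of_pairwise_commute h.2, mul_assoc,
      hcomm.left_comm]

theorem List.pairwise_range_of_lt {m : ℕ} {P : ℕ → ℕ → Prop}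
    (h : ∀ i k, i < k → k < m → P i k) : (range m).Pairwise P :=
  pairwise_lt_range.imp_of_mem fun _ hk hik => h _ _ hik (mem_range.mp hk)

def descProd (g : ℕ → M) (m : ℕ) : M := ((range m).map fun i => g (m - i)).prod

@[simp] theorem descProd_zero (g : ℕ → M) : descProd g 0 = 1 := rfl

theorem descProd_succ (g : ℕ → M) (m : ℕ) : descProd g (m + 1) = g (m + 1) * descProd g m := by
  simp [descProd, range_succ_eq_map, Function.comp_def]

theorem SemiconjBy.descProd {y : M} {f g : ℕ → M} {m : ℕ}
    (h : ∀ a, 1 ≤ a → a ≤ m → SemiconjBy y (f a) (g a)) :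
    SemiconjBy y (descProd f m) (descProd g m) := by
  induction m with
  | zero => exact SemiconjBy.one_right y
  | succ m ih =>
    rw [descProd_succ, descProd_succ]
    exact (h _ (by omega) le_rfl).mul_right (ih fun a h₁ h₂ => h a h₁ (by omega))

theorem Commute.descProd_right {x : M} {g : ℕ → M} {m : ℕ}
    (h : ∀ a, 1 ≤ a → a ≤ m → Commute x (g a)) : Commute x (descProd g m) :=
  SemiconjBy.descProd h

theorem Commute.descProd_left {x : M} {g : ℕ → M} {m : ℕ}
    (h : ∀ a, 1 ≤ a → a ≤ m → Commute (g a) x) : Commute (descProd g m) x :=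
  (Commute.descProd_right fun a h₁ h₂ => (h a h₁ h₂).symm).symm

theorem descProd_mul {f g : ℕ → M} {m : ℕ}
    (h : ∀ a c, 1 ≤ c → c < a → a ≤ m → Commute (g a) (f c)) :
    descProd (fun a => f a * g a) m = descProd f m * descProd g m :=
  prod_map_mul_of_pairwise_commute <| pairwise_range_of_lt fun _ _ _ _ =>
    h _ _ (by omega) (by omega) (by omega)

def diagRow (n : ℕ) (f : ℕ → ℕ → M) (i : ℕ) : M :=
  ((range (n - 1 - i)).map fun j => f (j + 1) (i + 1 + (j + 1))).prod

def diagProd (n : ℕ) (f : ℕ → ℕ → M) : M := ((range (n - 1)).map (diagRow n f)).prod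

def columnProd (f : ℕ → ℕ → M) : ℕ → M
  | 0 => 1
  | m + 1 => columnProd f m * descProd (f · (m + 1)) m

/-- `diagProd` runs over the pairs `a < b` ordered by `(b - a, a)`, `columnProd` by `b` and then
by decreasing `a`; the pairs `(a, b)`, `(c, d)` whose relative order differs are those with
`a < c` and `b < d`. -/
def PairCommute (n : ℕ) (f : ℕ → ℕ → M) : Prop :=
  ∀ ⦃a b c d : ℕ⦄, 1 ≤ a → a < b → a < c → c < d → b < d → d ≤ n → Commute (f a b) (f c d)

theorem PairCommute.mono {n n' : ℕ} {f : ℕ → ℕ → M} (hf : PairCommute n' f) (h : n ≤ n') :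
    PairCommute n f :=
  fun _ _ _ _ h₁ h₂ h₃ h₄ h₅ h₆ => hf h₁ h₂ h₃ h₄ h₅ (h₆.trans h)

theorem diagRow_succ (f : ℕ → ℕ → M) {m i : ℕ} (hi : i < m) :
    diagRow (m + 1) f i = diagRow m f i * f (m - i) (m + 1) := by
  rw [diagRow, show m + 1 - 1 - i = m - 1 - i + 1 by omega, range_succ, map_append, prod_append,
    diagRow, map_singleton, prod_singleton, show i + 1 + (m - 1 - i + 1) = m + 1 by omega,
    show m - 1 - i + 1 = m - i by omega]

theorem diagProd_succ {f : ℕ → ℕ → M} {m : ℕ} (hf : PairCommute (m + 1) f) :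
    diagProd (m + 1) f = diagProd m f * descProd (f · (m + 1)) m := by
  have hrow : ∀ i k, i < k → k < m → Commute (f (m - i) (m + 1)) (diagRow m f k) :=
    fun i k hik hkm => Commute.list_prod_right _ _ fun _ hx => by
      obtain ⟨j, hj, rfl⟩ := mem_map.mp hx
      have := mem_range.mp hj
      exact (hf (by omega) (by omega) (by omega) (by omega) (by omega) le_rfl).symm
  have hrows : ((range m).map (diagRow m f)).prod = diagProd m f := by
    cases m with
    | zero => rfl
    | succ m => simp [diagProd, range_succ, diagRow]
  rw [diagProd, Nat.add_sub_cancel, map_congr_left fun i hi => diagRow_succ f (mem_range.mp hi),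
    prod_map_mul_of_pairwise_commute (pairwise_range_of_lt hrow), hrows]
  rfl

theorem diagProd_eq_columnProd {n : ℕ} {f : ℕ → ℕ → M} (hf : PairCommute n f) :
    diagProd n f = columnProd f n := by
  induction n with
  | zero => rfl
  | succ m ih => rw [diagProd_succ hf, ih (hf.mono m.le_succ), columnProd]

theorem Commute.columnProd_right {x : M} {f : ℕ → ℕ → M} {m : ℕ}
    (h : ∀ a b, 1 ≤ a → a < b → b ≤ m → Commute x (f a b)) : Commute x (columnProd f m) := by
  induction m with
  | zero => exact Commute.one_right x
  | succ m ih =>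
    exact (ih fun a b h₁ h₂ h₃ => h a b h₁ h₂ (by omega)).mul_right
      (Commute.descProd_right fun a h₁ h₂ => h a _ h₁ (by omega) le_rfl)

def DisjointLegsCommute (n : ℕ) (r : ℕ → ℕ → ℕ → ℕ → M) : Prop :=
  ∀ i j k l a b c d : ℕ,
    1 ≤ i → i < j → j ≤ 3 → 1 ≤ k → k < l → l ≤ 3 →
    1 ≤ a → a < b → b ≤ n → 1 ≤ c → c < d → d ≤ n →
    (i, a) ≠ (k, c) → (i, a) ≠ (l, d) → (j, b) ≠ (k, c) → (j, b) ≠ (l, d) →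
    r i j a b * r k l c d = r k l c d * r i j a b

def YangBaxter (n : ℕ) (r : ℕ → ℕ → ℕ → ℕ → M) : Prop :=
  ∀ a b c : ℕ, 1 ≤ a → a < b → b < c → c ≤ n →
    r 1 2 a b * r 1 3 a c * r 2 3 b c = r 2 3 b c * r 1 3 a c * r 1 2 a b

namespace DisjointLegsCommute

variable {n : ℕ} {r : ℕ → ℕ → ℕ → ℕ → M} (hr : DisjointLegsCommute n r) {a b c d : ℕ}
include hr

theorem commute_self {i j : ℕ} (hi : 1 ≤ i) (hij : i < j) (hj : j ≤ 3)
    (hab : 1 ≤ a ∧ a < b ∧ b ≤ n) (hcd : 1 ≤ c ∧ c < d ∧ d ≤ n) (hac : a ≠ c) (hbd : b ≠ d) :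
    Commute (r i j a b) (r i j c d) :=
  hr i j i j a b c d hi hij hj hi hij hj hab.1 hab.2.1 hab.2.2 hcd.1 hcd.2.1 hcd.2.2
    (by simp [hac]) (by simp; omega) (by simp; omega) (by simp [hbd])

theorem commute_r12_r13 (hab : 1 ≤ a ∧ a < b ∧ b ≤ n) (hcd : 1 ≤ c ∧ c < d ∧ d ≤ n)
    (hac : a ≠ c) : Commute (r 1 2 a b) (r 1 3 c d) :=
  hr 1 2 1 3 a b c d le_rfl one_lt_two (by norm_num) le_rfl (by norm_num) le_rfl
    hab.1 hab.2.1 hab.2.2 hcd.1 hcd.2.1 hcd.2.2 (by simp [hac]) (by simp) (by simp) (by simp)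

theorem commute_r12_r23 (hab : 1 ≤ a ∧ a < b ∧ b ≤ n) (hcd : 1 ≤ c ∧ c < d ∧ d ≤ n)
    (hbc : b ≠ c) : Commute (r 1 2 a b) (r 2 3 c d) :=
  hr 1 2 2 3 a b c d le_rfl one_lt_two (by norm_num) one_le_two (by norm_num) le_rfl
    hab.1 hab.2.1 hab.2.2 hcd.1 hcd.2.1 hcd.2.2 (by simp) (by simp) (by simp [hbc]) (by simp)

theorem commute_r13_r23 (hab : 1 ≤ a ∧ a < b ∧ b ≤ n) (hcd : 1 ≤ c ∧ c < d ∧ d ≤ n)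
    (hbd : b ≠ d) : Commute (r 1 3 a b) (r 2 3 c d) :=
  hr 1 3 2 3 a b c d le_rfl (by norm_num) le_rfl one_le_two (by norm_num) le_rfl
    hab.1 hab.2.1 hab.2.2 hcd.1 hcd.2.1 hcd.2.2 (by simp) (by simp) (by simp) (by simp [hbd])

theorem pairCommute {i j : ℕ} (hi : 1 ≤ i) (hij : i < j) (hj : j ≤ 3) : PairCommute n (r i j) :=
  fun _ _ _ _ h₁ h₂ h₃ h₄ h₅ h₆ =>
    hr.commute_self hi hij hj ⟨h₁, h₂, by omega⟩ ⟨by omega, h₄, h₆⟩ (by omega) (by omega)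

theorem pairCommute_r13_mul_r12 : PairCommute n fun a b => r 1 3 a b * r 1 2 a b :=
  fun a b c d h₁ h₂ h₃ h₄ h₅ h₆ =>
    have hab : 1 ≤ a ∧ a < b ∧ b ≤ n := ⟨h₁, h₂, by omega⟩
    have hcd : 1 ≤ c ∧ c < d ∧ d ≤ n := ⟨by omega, h₄, h₆⟩
    Commute.mul_left
      ((hr.commute_self le_rfl (by norm_num) le_rfl hab hcd (by omega) (by omega)).mul_right
        (hr.commute_r12_r13 hcd hab (by omega)).symm)
      ((hr.commute_r12_r13 hab hcd (by omega)).mul_right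
        (hr.commute_self le_rfl one_lt_two (by norm_num) hab hcd (by omega) (by omega)))

theorem pairCommute_r13_mul_r23 : PairCommute n fun a b => r 1 3 a b * r 2 3 a b :=
  fun a b c d h₁ h₂ h₃ h₄ h₅ h₆ =>
    have hab : 1 ≤ a ∧ a < b ∧ b ≤ n := ⟨h₁, h₂, by omega⟩
    have hcd : 1 ≤ c ∧ c < d ∧ d ≤ n := ⟨by omega, h₄, h₆⟩
    Commute.mul_left
      ((hr.commute_self le_rfl (by norm_num) le_rfl hab hcd (by omega) (by omega)).mul_right
        (hr.commute_r13_r23 hab hcd (by omega)))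
      ((hr.commute_r13_r23 hcd hab (by omega)).symm.mul_right
        (hr.commute_self one_le_two (by norm_num) le_rfl hab hcd (by omega) (by omega)))

end DisjointLegsCommute

section Relations

variable {n : ℕ} {r : ℕ → ℕ → ℕ → ℕ → M}

theorem descProd_r12_mul_r13_r23 (hr : DisjointLegsCommute n r) (hy : YangBaxter n r)
    {m v : ℕ} (hm : m + 1 < v) (hv : v ≤ n) :
    descProd (r 1 2 · (m + 1)) m *
        (descProd (r 1 3 · v) m * (r 2 3 (m + 1) v * descProd (r 2 3 · v) m)) =
      r 2 3 (m + 1) v *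
        (descProd (r 1 3 · v) m * (descProd (r 2 3 · v) m * descProd (r 1 2 · (m + 1)) m)) := by
  set G := descProd (r 1 2 · (m + 1)) m
  set X := descProd (r 1 3 · v) m
  set Y := descProd (r 2 3 · v) m
  set y := r 2 3 (m + 1) v
  have hGX : G * X = descProd (fun a => r 1 2 a (m + 1) * r 1 3 a v) m :=
    (descProd_mul fun _ _ _ _ _ => (hr.commute_r12_r13 (by omega) (by omega) (by omega)).symm).symm
  have hXG : descProd (fun a => r 1 3 a v * r 1 2 a (m + 1)) m = X * G :=
    descProd_mul fun _ _ _ _ _ => hr.commute_r12_r13 (by omega) (by omega) (by omega)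
  have hybe : SemiconjBy y (descProd (fun a => r 1 3 a v * r 1 2 a (m + 1)) m)
      (descProd (fun a => r 1 2 a (m + 1) * r 1 3 a v) m) :=
    SemiconjBy.descProd fun a _ _ => by
      rw [SemiconjBy, hy a (m + 1) v (by omega) (by omega) hm hv, mul_assoc]
  have hGY : Commute G Y := Commute.descProd_left fun _ _ _ =>
    Commute.descProd_right fun _ _ _ => hr.commute_r12_r23 (by omega) (by omega) (by omega)
  calc G * (X * (y * Y)) = G * X * y * Y := by simp only [mul_assoc]
    _ = y * (X * (G * Y)) := by rw [hGX, ← hybe.eq, hXG]; simp only [mul_assoc]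
    _ = y * (X * (Y * G)) := by rw [hGY.eq]

theorem columnProd_r12_mul_descProd_r13_r23 (hr : DisjointLegsCommute n r)
    (hy : YangBaxter n r) {v : ℕ} (hv : v ≤ n) :
    ∀ {m}, m < v → columnProd (r 1 2) m * (descProd (r 1 3 · v) m * descProd (r 2 3 · v) m) =
      descProd (fun a => r 1 3 a v * r 2 3 a v) m * columnProd (r 1 2) m
  | 0, _ => by simp [columnProd]
  | m + 1, hm => by
    have ih := columnProd_r12_mul_descProd_r13_r23 hr hy hv (m := m) (by omega)
    have hstar := descProd_r12_mul_r13_r23 hr hy (m := m) hm hv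
    set D := columnProd (r 1 2) m
    set G := descProd (r 1 2 · (m + 1)) m
    set X := descProd (r 1 3 · v) m
    set Y := descProd (r 2 3 · v) m
    set x := r 1 3 (m + 1) v
    set y := r 2 3 (m + 1) v
    have hGx : Commute G x := Commute.descProd_left fun _ _ _ =>
      hr.commute_r12_r13 (by omega) (by omega) (by omega)
    have hDx : Commute D x := (Commute.columnProd_right fun _ _ _ _ _ =>
      (hr.commute_r12_r13 (by omega) (by omega) (by omega)).symm).symm
    have hDy : Commute D y := (Commute.columnProd_right fun _ _ _ _ _ =>
      (hr.commute_r12_r23 (by omega) (by omega) (by omega)).symm).symm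
    simp only [columnProd, descProd_succ]
    calc D * G * (x * X * (y * Y)) = x * (D * (G * (X * (y * Y)))) := by
          simp only [mul_assoc, hGx.left_comm, hDx.left_comm]
      _ = x * (y * (D * (X * Y) * G)) := by
          rw [hstar, hDy.left_comm]
          simp only [mul_assoc]
      _ = x * y * descProd (fun a => r 1 3 a v * r 2 3 a v) m * (D * G) := by
          rw [ih]; simp only [mul_assoc]

theorem columnProd_r13_r12_mul_columnProd_r23 (hr : DisjointLegsCommute n r)
    (hy : YangBaxter n r) : ∀ {k}, k ≤ n →
    columnProd (fun a b => r 1 3 a b * r 1 2 a b) k * columnProd (r 2 3) k =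
      columnProd (fun a b => r 1 3 a b * r 2 3 a b) k * columnProd (r 1 2) k
  | 0, _ => rfl
  | k + 1, hk => by
    have ih := columnProd_r13_r12_mul_columnProd_r23 hr hy (k := k) (by omega)
    have hconj := columnProd_r12_mul_descProd_r13_r23 hr hy hk (m := k) (lt_add_one k)
    have hXG : descProd (fun a => r 1 3 a (k + 1) * r 1 2 a (k + 1)) k =
        descProd (r 1 3 · (k + 1)) k * descProd (r 1 2 · (k + 1)) k :=
      descProd_mul fun _ _ _ _ _ => hr.commute_r12_r13 (by omega) (by omega) (by omega)
    simp only [columnProd, hXG]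
    set B := columnProd (r 2 3) k
    set D := columnProd (r 1 2) k
    set X := descProd (r 1 3 · (k + 1)) k
    set G := descProd (r 1 2 · (k + 1)) k
    set Y := descProd (r 2 3 · (k + 1)) k
    have hXB : Commute X B := Commute.descProd_left fun _ _ _ =>
      Commute.columnProd_right fun _ _ _ _ _ => hr.commute_r13_r23 (by omega) (by omega) (by omega)
    have hGB : Commute G B := Commute.descProd_left fun _ _ _ =>
      Commute.columnProd_right fun _ _ _ _ _ => hr.commute_r12_r23 (by omega) (by omega) (by omega)
    have hGY : Commute G Y := Commute.descProd_left fun _ _ _ =>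
      Commute.descProd_right fun _ _ _ => hr.commute_r12_r23 (by omega) (by omega) (by omega)
    calc _ = columnProd (fun a b => r 1 3 a b * r 1 2 a b) k * B * (X * (G * Y)) := by
          simp only [mul_assoc, hGB.left_comm, hXB.left_comm]
      _ = _ := by
          rw [ih, hGY.eq, mul_assoc, ← mul_assoc X, ← mul_assoc D, hconj]
          simp only [mul_assoc]

end Relations

end

/-- a combinatorial lemma in an arbitrary monoid. Elements `r_{ij}^{ab}`
(`1 ≤ i < j ≤ 3`, `1 ≤ a < b ≤ n`) satisfying the disjoint-index commutation relations
and the Yang–Baxter relations satisfy the stated product identity; all products are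
taken left to right in lexicographic order of `(i,j)` (encoded by nested lists). -/
theorem stmt_17 {M : Type*} [Monoid M] (n : ℕ) (r : ℕ → ℕ → ℕ → ℕ → M)
    (hcomm : ∀ i j k l a b c d : ℕ,
      1 ≤ i → i < j → j ≤ 3 → 1 ≤ k → k < l → l ≤ 3 →
      1 ≤ a → a < b → b ≤ n → 1 ≤ c → c < d → d ≤ n →
      (i, a) ≠ (k, c) → (i, a) ≠ (l, d) → (j, b) ≠ (k, c) → (j, b) ≠ (l, d) →
      r i j a b * r k l c d = r k l c d * r i j a b)
    (hybe : ∀ a b c : ℕ, 1 ≤ a → a < b → b < c → c ≤ n →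
      r 1 2 a b * r 1 3 a c * r 2 3 b c = r 2 3 b c * r 1 3 a c * r 1 2 a b) :
    (((List.range (n - 1)).map fun i =>
        (((List.range (n - 1 - i)).map fun j =>
          r 1 3 (j + 1) (i + 1 + (j + 1)) * r 1 2 (j + 1) (i + 1 + (j + 1))).prod)).prod)
      * (((List.range (n - 1)).map fun i =>
        (((List.range (n - 1 - i)).map fun j =>
          r 2 3 (j + 1) (i + 1 + (j + 1))).prod)).prod)
    = (((List.range (n - 1)).map fun i =>
        (((List.range (n - 1 - i)).map fun j =>
          r 1 3 (j + 1) (i + 1 + (j + 1)) * r 2 3 (j + 1) (i + 1 + (j + 1))).prod)).prod)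
      * (((List.range (n - 1)).map fun i =>
        (((List.range (n - 1 - i)).map fun j =>
          r 1 2 (j + 1) (i + 1 + (j + 1))).prod)).prod) := by
  have hr : DisjointLegsCommute n r := hcomm
  change diagProd n (fun a b => r 1 3 a b * r 1 2 a b) * diagProd n (r 2 3) =
    diagProd n (fun a b => r 1 3 a b * r 2 3 a b) * diagProd n (r 1 2)
  rw [diagProd_eq_columnProd hr.pairCommute_r13_mul_r12,
    diagProd_eq_columnProd (hr.pairCommute (by norm_num) (by norm_num) le_rfl),
    diagProd_eq_columnProd hr.pairCommute_r13_mul_r23,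
    diagProd_eq_columnProd (hr.pairCommute le_rfl (by norm_num) (by norm_num))]
  exact columnProd_r13_r12_mul_columnProd_r23 hr hybe le_rfl
end

section
/- Let (Γ₁, Γ₂, τ) be a Belavin–Drinfeld triple and let x = Σ_i x_i E_{ii} be a diagonal matrix satisfying α(x) = (τα)(x) for every α ∈ Γ₁, where (e_i − e_j)(x) = x_i − x_j. Then x ⊗ 1 + 1 ⊗ x commutes with R̄_GGS and with R̄_J: (x⊗1 + 1⊗x)·R̄_GGS = R̄_GGS·(x⊗1 + 1⊗x) and (x⊗1 + 1⊗x)·R̄_J = R̄_J·(x⊗1 + 1⊗x). -/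
/-!
In the basis `E_{ij} ⊗ E_{kl}` the matrix `x ⊗ 1 + 1 ⊗ x` is diagonal with entries
`x_i + x_k`, so a matrix commutes with it iff it only connects basis vectors of equal weight.
Every term `E_{ij} ⊗ E_{ji}`, `E_{ii} ⊗ E_{jj}` of `R_s` does, and so do `e_{−α} ⊗ e_β` and
`e_β ⊗ e_{−α}` for `α ≺ β`: by additivity of `τ`, `α(x) = (τα)(x)` on `Γ₁` propagates to
`α(x) = β(x)` on `Γ̃₁`. The commutant is a subalgebra stable under the inverse and under the flip
of tensor factors, which settles `R̄_GGS` and `R̄_J = J⁻¹ R_s J₂₁`.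
-/

namespace GGS

open Finset
open scoped Classical

noncomputable section

variable {n : ℕ}

theorem _root_.Matrix.commute_nonsing_inv_right {ι R : Type*} [Fintype ι] [DecidableEq ι]
    [CommRing R] {A B : Matrix ι ι R} (h : Commute A B) : Commute A B⁻¹ := by
  by_cases hB : IsUnit B.det
  · exact Commute.units_inv_right (u := B.nonsingInvUnit hB) h
  · rw [Matrix.nonsing_inv_apply_not_isUnit B hB]
    exact Commute.zero_right A

/-- `α(x) = (τα)(x)` for all `α ∈ Γ₁`. -/
def TauInvariant (T : BDTriple n) (x : ℕ → ℂ) : Prop :=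
  ∀ s ∈ T.Γ1, x s - x (s + 1) = x (T.τ s) - x (T.τ s + 1)

/-- `x ⊗ 1 + 1 ⊗ x` for the diagonal matrix `x = Σ x_i E_{ii}`. -/
def weightDiag (x : ℕ → ℂ) : MatT n := Matrix.diagonal fun p => x p.1 + x p.2

lemma sum_rvec_mul (x : ℕ → ℂ) {N a b : ℕ} (ha : a < N) (hb : b < N) :
    ∑ m ∈ range N, rvec a b m * x m = x a - x b := by
  simp only [rvec, evec, Pi.sub_apply, sub_mul, sum_sub_distrib, ite_mul, one_mul, zero_mul,
    sum_ite_eq', mem_range, ha, hb, if_true]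

namespace TauInvariant

variable {T : BDTriple n} {x : ℕ → ℂ}

/-- Pair `e_{r₁} − e_{r₂} = Σ_{k ∈ [p₁, p₂)} α_{τ k}` with `x` and telescope. -/
lemma sub_eq_sub_of_tauStep (hx : TauInvariant T x) {p r : ℕ × ℕ} (h : tauStep T p r) :
    x p.1 - x p.2 = x r.1 - x r.2 := by
  obtain ⟨⟨hpr, hΓ1⟩, -, hτ⟩ := h
  set N := n + r.1 + r.2 + 1
  have hsum := congrArg (fun v => ∑ m ∈ range N, v m * x m) hτ
  simp only [Finset.sum_apply, Finset.sum_mul] at hsum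
  rw [sum_rvec_mul x (by omega) (by omega), Finset.sum_comm] at hsum
  have hstep : ∀ k ∈ Ico p.1 p.2, ∑ m ∈ range N, svec (T.τ k) m * x m = x k - x (k + 1) := by
    intro k hk
    obtain ⟨hk1, hk2⟩ := mem_Ico.1 hk
    have hk : k ∈ T.Γ1 := hΓ1 k hk1 hk2
    have hτk : T.τ k + 1 < n := T.mem2 _ (T.bij.mapsTo hk)
    rw [svec, sum_rvec_mul x (by omega) (by omega), hx k hk]
  rw [hsum, sum_congr rfl hstep, ← neg_sub, ← Finset.sum_Ico_sub x hpr.le, ← sum_neg_distrib]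
  exact sum_congr rfl fun k _ => neg_sub _ _

lemma sub_eq_sub_of_precK (hx : TauInvariant T x) :
    ∀ {k : ℕ} {p r : ℕ × ℕ}, precK T k p r → x p.1 - x p.2 = x r.1 - x r.2
  | 0, _, _, h => by rw [show _ = _ from h]
  | _ + 1, _, _, ⟨_, hs, h⟩ => (hx.sub_eq_sub_of_tauStep hs).trans (hx.sub_eq_sub_of_precK h)

end TauInvariant

lemma sum_smul_E_eq_diagonal (x : ℕ → ℂ) :
    ∑ i ∈ range n, x i • E n i i = Matrix.diagonal fun a : Fin n => x a := by
  ext a b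
  simp only [Matrix.sum_apply, Matrix.smul_apply, E, smul_eq_mul, mul_ite, mul_one, mul_zero,
    Matrix.diagonal_apply]
  split_ifs with hab
  · subst hab
    simp
  · refine sum_eq_zero fun c _ => if_neg ?_
    rintro ⟨rfl, h⟩
    exact hab (Fin.ext h.symm)

lemma tens_add_tens_eq_weightDiag (x : ℕ → ℂ) :
    tens (∑ i ∈ range n, x i • E n i i) 1 + tens 1 (∑ i ∈ range n, x i • E n i i)
      = weightDiag x := by
  rw [sum_smul_E_eq_diagonal, ← Matrix.diagonal_one]
  show Matrix.kroneckerMap (· * · : ℂ → ℂ → ℂ) _ _ + Matrix.kroneckerMap (· * · : ℂ → ℂ → ℂ) _ _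
    = _
  rw [Matrix.diagonal_kronecker_diagonal, Matrix.diagonal_kronecker_diagonal, Matrix.diagonal_add]
  simp [weightDiag]

lemma commute_weightDiag_tens (x : ℕ → ℂ) {a b c d : ℕ} (h : x a + x c = x b + x d) :
    Commute (weightDiag x) (tens (E n a b) (E n c d)) := by
  ext p r
  rw [weightDiag, Matrix.diagonal_mul, Matrix.mul_diagonal]
  simp only [tens, E]
  split_ifs <;> simp_all

lemma commute_weightDiag_swap21 (x : ℕ → ℂ) {M : MatT n} (h : Commute (weightDiag x) M) :
    Commute (weightDiag x) (swap21 M) := by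
  have hswap : swap21 (weightDiag x : MatT n) = weightDiag x := by
    ext p r
    simp [swap21, weightDiag, Matrix.diagonal_apply, Prod.ext_iff, and_comm, add_comm]
  rw [← hswap]
  exact h.map (Matrix.reindexAlgEquiv ℂ ℂ (Equiv.prodComm (Fin n) (Fin n)))

lemma commute_sumRoots {D : MatT n} {f : ℕ × ℕ → ℕ × ℕ → MatT n}
    (h : ∀ p r, Commute D (f p r)) : Commute D (sumRoots n f) :=
  Commute.sum_right _ _ _ fun _ _ => Commute.sum_right _ _ _ fun _ _ =>
    Commute.sum_right _ _ _ fun _ _ => Commute.sum_right _ _ _ fun _ _ => h _ _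

lemma commute_weightDiag_RsQ (x : ℕ → ℂ) (q : ℝ) : Commute (weightDiag x) (RsQ n q) := by
  have hdiag : ∀ i j : ℕ, Commute (weightDiag x) (tens (E n i i) (E n j j)) :=
    fun _ _ => commute_weightDiag_tens x rfl
  have hflip : ∀ i j : ℕ, Commute (weightDiag x) (tens (E n i j) (E n j i)) :=
    fun _ _ => commute_weightDiag_tens x (add_comm _ _)
  refine ((Commute.sum_right _ _ _ fun i _ => hdiag i i).smul_right _
    |>.add_right (Commute.sum_right _ _ _ fun i _ => Commute.sum_right _ _ _ fun j _ => ?_)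
    |>.add_right
      ((Commute.sum_right _ _ _ fun i _ => Commute.sum_right _ _ _ fun j _ => ?_).smul_right _))
  · split_ifs
    exacts [hdiag i j, Commute.zero_right _]
  · split_ifs
    exacts [hflip i j, Commute.zero_right _]

namespace TauInvariant

variable {T : BDTriple n} {x : ℕ → ℂ}

lemma commute_weightDiag_tens_of_precK (hx : TauInvariant T x) {k : ℕ} {p r : ℕ × ℕ}
    (h : precK T k p r) : Commute (weightDiag x) (tens (E n r.1 r.2) (E n p.2 p.1)) :=
  commute_weightDiag_tens x (by linear_combination -hx.sub_eq_sub_of_precK h)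

lemma commute_weightDiag_tens_of_prec (hx : TauInvariant T x) {p r : ℕ × ℕ} (h : prec T p r) :
    Commute (weightDiag x) (tens (E n p.2 p.1) (E n r.1 r.2)) :=
  commute_weightDiag_tens x (by linear_combination -hx.sub_eq_sub_of_precK h.choose_spec)

lemma commute_weightDiag_RbarGGS (hx : TauInvariant T x) (q : ℝ) :
    Commute (weightDiag x) (RbarGGS q T) := by
  refine (commute_weightDiag_RsQ x q).add_right (Commute.smul_right (commute_sumRoots ?_) _)
  intro p r
  split_ifs with h
  · exact ((hx.commute_weightDiag_tens_of_prec h).smul_right _ |>.sub_right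
      ((hx.commute_weightDiag_tens_of_precK h.choose_spec).smul_right _)).smul_right _
  · exact Commute.zero_right _

lemma commute_weightDiag_Jmat (hx : TauInvariant T x) (q : ℝ) :
    Commute (weightDiag x) (Jmat q T) := by
  refine Commute.list_prod_right _ _ fun M hM => ?_
  obtain ⟨i, -, rfl⟩ := List.mem_map.1 hM
  refine (Commute.one_right _).add_right (commute_sumRoots fun p r => ?_)
  split_ifs with h
  · exact (hx.commute_weightDiag_tens_of_precK h).smul_right _
  · exact Commute.zero_right _

lemma commute_weightDiag_RbarJ (hx : TauInvariant T x) (q : ℝ) :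
    Commute (weightDiag x) (RbarJ q T) :=
  ((Matrix.commute_nonsing_inv_right (hx.commute_weightDiag_Jmat q)).mul_right
    (commute_weightDiag_RsQ x q)).mul_right
      (commute_weightDiag_swap21 x (hx.commute_weightDiag_Jmat q))

end TauInvariant

theorem stmt_18_general {n : ℕ} (q : ℝ)
    (T : BDTriple n) (x : ℕ → ℂ)
    (hsym : ∀ s ∈ T.Γ1, x s - x (s + 1) = x (T.τ s) - x (T.τ s + 1)) :
    ∀ X : MatT n,
      X = tens (∑ i ∈ range n, x i • E n i i) 1 + tens 1 (∑ i ∈ range n, x i • E n i i) →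
      X * RbarGGS q T = RbarGGS q T * X ∧ X * RbarJ q T = RbarJ q T * X := by
  rintro X rfl
  rw [tens_add_tens_eq_weightDiag]
  have hx : TauInvariant T x := hsym
  exact ⟨(hx.commute_weightDiag_RbarGGS q).eq, (hx.commute_weightDiag_RbarJ q).eq⟩

/-- if `x` is a diagonal matrix with `α(x) = (τα)(x)` for all `α ∈ Γ₁`,
then `x ⊗ 1 + 1 ⊗ x` commutes with `R̄_GGS` and with `R̄_J`. -/
theorem stmt_18 {n : ℕ} (hn : 2 ≤ n) (q : ℝ) (hq : 0 < q) (hq1 : q ≠ 1)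
    (T : BDTriple n) (x : ℕ → ℂ)
    (hsym : ∀ s ∈ T.Γ1, x s - x (s + 1) = x (T.τ s) - x (T.τ s + 1)) :
    ∀ X : MatT n,
      X = tens (∑ i ∈ range n, x i • E n i i) 1 + tens 1 (∑ i ∈ range n, x i • E n i i) →
      X * RbarGGS q T = RbarGGS q T * X ∧ X * RbarJ q T = RbarJ q T * X :=
  stmt_18_general q T x hsym

end
end GGS
end
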